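/- Consider the unconstrained minimum-cost inverse optimization problem with multiple cost functions c^1, …, c^k under the weighted ℓ∞-norm objective. Then the minimum of ‖p‖_{∞,w} over all feasible deviation vectors p is attained and equals max{ 0, max{ (c^j(F*) − c^j(F)) / ( (1/w)(F* △ F) ) : j ∈ [k], F ∈ 𝓕, F ≠ F* } }, where the inner maximum over an empty index set is taken to be −∞. -/

import Mathlib

open Finset

noncomputable section

variable {S : Type*}

/-- A deviation vector `p` is feasible: it respects the bounds `l ≤ p ≤ u`
(interpreted in the extended reals) and makes `Fstar` a minimum-cost member
of `𝓕` with respect to `c - p`. -/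
def IsFeasibleDev (𝓕 : Finset (Finset S)) (Fstar : Finset S)
    (c : S → ℝ) (l u : S → EReal) (p : S → ℝ) : Prop :=
  (∀ s, l s ≤ (p s : EReal) ∧ (p s : EReal) ≤ u s) ∧
  ∀ F ∈ 𝓕, ∑ s ∈ Fstar, (c s - p s) ≤ ∑ s ∈ F, (c s - p s)

/-- The weighted ℓ∞-norm `‖p‖_{∞,w} = max_{s ∈ S} w(s)·|p(s)|`. -/
def normI [Fintype S] [Nonempty S] (w p : S → ℝ) : ℝ :=
  (univ : Finset S).sup' univ_nonempty fun s => w s * |p s|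

/-- The special deviation vector `p^δ` of the weighted ℓ∞-norm setting:
`δ/w(s)` clamped to `[ℓ(s), u(s)]` on `F*`, and `-δ/w(s)` clamped to
`[ℓ(s), u(s)]` outside of `F*`. -/
def pI [DecidableEq S] (Fstar : Finset S) (l u : S → EReal) (w : S → ℝ) (δ : ℝ) (s : S) : ℝ :=
  if s ∈ Fstar then
    if ((δ / w s : ℝ) : EReal) < l s then (l s).toReal
    else if u s < ((δ / w s : ℝ) : EReal) then (u s).toReal
    else δ / w s
  else
    if ((-(δ / w s) : ℝ) : EReal) < l s then (l s).toReal
    else if u s < ((-(δ / w s) : ℝ) : EReal) then (u s).toReal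
    else -(δ / w s)

/-- The min-max bound: `max{0, max{(cʲ(F*) − cʲ(F)) / (1/w)(F* △ F) : j, F ∈ 𝓕, F ≠ F*}}`. -/
def minmaxBound [DecidableEq S] {J : Type*} [Fintype J]
    (𝓕 : Finset (Finset S)) (Fstar : Finset S) (c : J → S → ℝ) (w : S → ℝ) : ℝ :=
  max 0 (WithBot.unbotD 0 (((univ : Finset J) ×ˢ (𝓕.erase Fstar)).image fun jF =>
    ((∑ s ∈ Fstar, c jF.1 s) - (∑ s ∈ jF.2, c jF.1 s)) /
      (∑ s ∈ (Fstar \ jF.2) ∪ (jF.2 \ Fstar), (w s)⁻¹)).max)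

/-!
For feasible `q` and `F ≠ F*`, feasibility gives `cʲ(F*) − cʲ(F) ≤ q(F*) − q(F)`, and the right
side is at most `‖q‖_{∞,w} · (1/w)(F* △ F)` since `|q(s)| ≤ ‖q‖_{∞,w} / w(s)`; so every ratio, and
`0`, is a lower bound for `‖q‖_{∞,w}`. Conversely, with `δ` the min-max bound, the deviation
`δ / w` on `F*` and `−δ / w` off `F*` has norm exactly `δ` and raises `p(F*) − p(F)` to exactly
`δ · (1/w)(F* △ F)`, which dominates every `cʲ(F*) − cʲ(F)`, so it is feasible.
-/

theorem sum_sub_le_sum_sub_iff {A B : Finset S} {c q : S → ℝ} :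
    ∑ s ∈ A, (c s - q s) ≤ ∑ s ∈ B, (c s - q s) ↔
      ∑ s ∈ A, c s - ∑ s ∈ B, c s ≤ ∑ s ∈ A, q s - ∑ s ∈ B, q s := by
  rw [Finset.sum_sub_distrib, Finset.sum_sub_distrib]
  constructor <;> intro h <;> linarith

section normI

variable [Fintype S] [Nonempty S] {w : S → ℝ}

theorem mul_abs_le_normI (w q : S → ℝ) (s : S) : w s * |q s| ≤ normI w q :=
  Finset.le_sup' (fun s => w s * |q s|) (Finset.mem_univ s)

theorem normI_nonneg (hw : ∀ s, 0 ≤ w s) (q : S → ℝ) : 0 ≤ normI w q :=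
  let ⟨s⟩ := ‹Nonempty S›
  (mul_nonneg (hw s) (abs_nonneg _)).trans (mul_abs_le_normI w q s)

theorem abs_le_normI_mul_inv (hw : ∀ s, 0 < w s) (q : S → ℝ) (s : S) :
    |q s| ≤ normI w q * (w s)⁻¹ := by
  rw [← div_eq_mul_inv, le_div_iff₀ (hw s), mul_comm]
  exact mul_abs_le_normI w q s

end normI

section costRatio

variable [DecidableEq S]

theorem sum_inv_symmDiff_pos {w : S → ℝ} (hw : ∀ s, 0 < w s) {A B : Finset S} (hne : A ≠ B) :
    0 < ∑ s ∈ (A \ B) ∪ (B \ A), (w s)⁻¹ := by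
  refine Finset.sum_pos (fun s _ => inv_pos.2 (hw s)) ?_
  rw [Finset.nonempty_iff_ne_empty, Ne, Finset.union_eq_empty, Finset.sdiff_eq_empty_iff_subset,
    Finset.sdiff_eq_empty_iff_subset]
  exact fun h => hne (Finset.Subset.antisymm h.1 h.2)

def costRatio (c w : S → ℝ) (A B : Finset S) : ℝ :=
  (∑ s ∈ A, c s - ∑ s ∈ B, c s) / ∑ s ∈ (A \ B) ∪ (B \ A), (w s)⁻¹

section minmaxBound

variable {J : Type*} [Fintype J] {𝓕 : Finset (Finset S)} {Fstar : Finset S} {c : J → S → ℝ}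
  {w : S → ℝ}

theorem minmaxBound_nonneg : 0 ≤ minmaxBound 𝓕 Fstar c w :=
  le_max_left _ _

theorem costRatio_le_minmaxBound (j : J) {F : Finset S} (hF : F ∈ 𝓕) (hne : F ≠ Fstar) :
    costRatio (c j) w Fstar F ≤ minmaxBound 𝓕 Fstar c w :=
  le_max_of_le_right <| WithBot.le_unbotD <| Finset.le_max <| Finset.mem_image.2
    ⟨(j, F), Finset.mem_product.2 ⟨Finset.mem_univ j, Finset.mem_erase.2 ⟨hne, hF⟩⟩, rfl⟩

theorem minmaxBound_le {N : ℝ} (hN : 0 ≤ N)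
    (h : ∀ j, ∀ F ∈ 𝓕, F ≠ Fstar → costRatio (c j) w Fstar F ≤ N) :
    minmaxBound 𝓕 Fstar c w ≤ N := by
  refine max_le hN <| (WithBot.unbotD_le_iff fun _ => hN).2 <| Finset.max_le_iff.2 ?_
  simp only [Finset.mem_image, Finset.mem_product, Finset.mem_erase]
  rintro _ ⟨⟨j, F⟩, ⟨-, hne, hF⟩, rfl⟩
  exact WithBot.coe_le_coe.2 (h j F hF hne)

end minmaxBound

theorem sum_sub_sum_le_normI_mul [Fintype S] [Nonempty S] {w : S → ℝ} (hw : ∀ s, 0 < w s)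
    (q : S → ℝ) (A B : Finset S) :
    ∑ s ∈ A, q s - ∑ s ∈ B, q s ≤ normI w q * ∑ s ∈ (A \ B) ∪ (B \ A), (w s)⁻¹ := by
  rw [← Finset.sum_sdiff_sub_sum_sdiff, Finset.mul_sum, Finset.sum_union disjoint_sdiff_sdiff,
    sub_eq_add_neg, ← Finset.sum_neg_distrib]
  gcongr with s _ s _
  · exact (le_abs_self _).trans (abs_le_normI_mul_inv hw q s)
  · exact (neg_le_abs _).trans (abs_le_normI_mul_inv hw q s)

theorem costRatio_le_normI [Fintype S] [Nonempty S] {w : S → ℝ} (hw : ∀ s, 0 < w s)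
    {c q : S → ℝ} {A B : Finset S} (hne : B ≠ A)
    (hq : ∑ s ∈ A, (c s - q s) ≤ ∑ s ∈ B, (c s - q s)) :
    costRatio c w A B ≤ normI w q := by
  rw [costRatio, div_le_iff₀ (sum_inv_symmDiff_pos hw hne.symm)]
  exact (sum_sub_le_sum_sub_iff.1 hq).trans (sum_sub_sum_le_normI_mul hw q A B)

/-- `pI` without the bounds `l`, `u`. -/
def signedDev (A : Finset S) (w : S → ℝ) (δ : ℝ) (s : S) : ℝ :=
  if s ∈ A then δ / w s else -(δ / w s)

theorem sum_signedDev_sub_sum (A B : Finset S) (w : S → ℝ) (δ : ℝ) :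
    ∑ s ∈ A, signedDev A w δ s - ∑ s ∈ B, signedDev A w δ s =
      δ * ∑ s ∈ (A \ B) ∪ (B \ A), (w s)⁻¹ := by
  rw [← Finset.sum_sdiff_sub_sum_sdiff, Finset.sum_union disjoint_sdiff_sdiff, mul_add,
    Finset.mul_sum, Finset.mul_sum, sub_eq_add_neg, ← Finset.sum_neg_distrib]
  congr 1 <;> refine Finset.sum_congr rfl fun s hs => ?_
  · simp [signedDev, (Finset.mem_sdiff.1 hs).1, div_eq_mul_inv]
  · simp [signedDev, (Finset.mem_sdiff.1 hs).2, div_eq_mul_inv]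

theorem normI_signedDev [Fintype S] [Nonempty S] {w : S → ℝ} (hw : ∀ s, 0 < w s) (A : Finset S)
    {δ : ℝ} (hδ : 0 ≤ δ) : normI w (signedDev A w δ) = δ := by
  have h : ∀ s, w s * |signedDev A w δ s| = δ := fun s => by
    rw [signedDev, apply_ite abs, abs_neg, ite_self, abs_of_nonneg (div_nonneg hδ (hw s).le),
      mul_div_cancel₀ _ (hw s).ne']
  simp only [normI, h, Finset.sup'_const]

theorem signedDev_feasible {w : S → ℝ} (hw : ∀ s, 0 < w s) {c : S → ℝ} {A B : Finset S} {δ : ℝ}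
    (hδ : B ≠ A → costRatio c w A B ≤ δ) :
    ∑ s ∈ A, (c s - signedDev A w δ s) ≤ ∑ s ∈ B, (c s - signedDev A w δ s) := by
  rcases eq_or_ne B A with rfl | hne
  · exact le_rfl
  rw [sum_sub_le_sum_sub_iff, sum_signedDev_sub_sum]
  exact (div_le_iff₀ (sum_inv_symmDiff_pos hw hne.symm)).1 (hδ hne)

end costRatio

theorem linf_minmax_general [Fintype S] [DecidableEq S] [Nonempty S]
    {J : Type*} [Fintype J]
    (𝓕 : Finset (Finset S)) (Fstar : Finset S) (c : J → S → ℝ) (w : S → ℝ)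
    (hw : ∀ s, 0 < w s) :
    ∃ p : S → ℝ,
      (∀ j, ∀ F ∈ 𝓕, ∑ s ∈ Fstar, (c j s - p s) ≤ ∑ s ∈ F, (c j s - p s)) ∧
      normI w p = minmaxBound 𝓕 Fstar c w ∧
      ∀ q : S → ℝ,
        (∀ j, ∀ F ∈ 𝓕, ∑ s ∈ Fstar, (c j s - q s) ≤ ∑ s ∈ F, (c j s - q s)) →
        minmaxBound 𝓕 Fstar c w ≤ normI w q :=
  ⟨signedDev Fstar w (minmaxBound 𝓕 Fstar c w),
    fun j _ hF => signedDev_feasible hw (costRatio_le_minmaxBound j hF),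
    normI_signedDev hw Fstar minmaxBound_nonneg,
    fun q hq => minmaxBound_le (normI_nonneg (fun s => (hw s).le) q)
      fun j F hF hne => costRatio_le_normI hw hne (hq j F hF)⟩

theorem linf_minmax [Fintype S] [DecidableEq S] [Nonempty S]
    {J : Type*} [Fintype J] [Nonempty J]
    (𝓕 : Finset (Finset S)) (Fstar : Finset S) (c : J → S → ℝ) (w : S → ℝ)
    (hw : ∀ s, 0 < w s) (h𝓕 : 𝓕.Nonempty) (hF : Fstar ∈ 𝓕) :
    ∃ p : S → ℝ,
      (∀ j, ∀ F ∈ 𝓕, ∑ s ∈ Fstar, (c j s - p s) ≤ ∑ s ∈ F, (c j s - p s)) ∧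
      normI w p = minmaxBound 𝓕 Fstar c w ∧
      ∀ q : S → ℝ,
        (∀ j, ∀ F ∈ 𝓕, ∑ s ∈ Fstar, (c j s - q s) ≤ ∑ s ∈ F, (c j s - q s)) →
        minmaxBound 𝓕 Fstar c w ≤ normI w q :=
  linf_minmax_general 𝓕 Fstar c w hw
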